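/- arXiv:1910.09856 — 5 statements merged into one kernel-verified Lean document; each statement's English description precedes it below -/
import Mathlib

section
/- (Proposition 1) Let h_b = Σ_{i=1}^{N_b} V_{i,b} e^{jφ_{i,b}} and h_e = Σ_{i=1}^{N_e} V_{i,e} e^{jφ_{i,e}}, where all amplitudes are positive with V_{1,k} ≥ V_{2,k} ≥ … ≥ V_{N_k,k} for k = b, e, and all phases are independent random variables each uniformly distributed on [0, 2π). Let γ_b = γ̄_b |h_b|² / (Σ_{i=1}^{N_b} V_{i,b}²) and γ_e = γ̄_e |h_e|² / (Σ_{i=1}^{N_e} V_{i,e}²) with γ̄_b, γ̄_e > 0, and define γ_b^min = γ̄_b ([V_{1,b} − Σ_{i=2}^{N_b} V_{i,b}]⁺)² / (Σ_{i=1}^{N_b} V_{i,b}²) and γ_e^max = γ̄_e (Σ_{i=1}^{N_e} V_{i,e})² / (Σ_{i=1}^{N_e} V_{i,e}²). If R_s > 0 and γ_b^min > 2^{R_s} γ_e^max + 2^{R_s} − 1, then P([log₂(1+γ_b) − log₂(1+γ_e)]⁺ < R_s) = 0, i.e., perfect secrecy is achieved. -/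
/-!
By the triangle inequality, `|h_b| ≥ [V_{1,b} − Σ_{i≥2} V_{i,b}]⁺` and `|h_e| ≤ Σ V_{i,e}` hold
for every choice of phases, so `γ_b ≥ γ_b^min` and `γ_e ≤ γ_e^max` pointwise.
The hypothesis then gives `2^{R_s} (1 + γ_e) < 1 + γ_b` everywhere, i.e. the secrecy capacity is
at least `R_s` at every outcome and the outage event is empty.
-/

open MeasureTheory ProbabilityTheory Complex Finset Real

noncomputable def uniformPhase : Measure ℝ :=
  (ENNReal.ofReal (2 * Real.pi))⁻¹ • (volume.restrict (Set.Ico 0 (2 * Real.pi)))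

theorem norm_sub_sum_erase_le_norm_sum {ι E : Type*} [SeminormedAddCommGroup E] [DecidableEq ι]
    {s : Finset ι} {i₀ : ι} (hi₀ : i₀ ∈ s) (z : ι → E) :
    ‖z i₀‖ - ∑ i ∈ s.erase i₀, ‖z i‖ ≤ ‖∑ i ∈ s, z i‖ := by
  rw [← add_sum_erase s z hi₀]
  calc ‖z i₀‖ - ∑ i ∈ s.erase i₀, ‖z i‖ ≤ ‖z i₀‖ - ‖∑ i ∈ s.erase i₀, z i‖ := by
        gcongr; exact norm_sum_le _ _
    _ ≤ ‖z i₀ + ∑ i ∈ s.erase i₀, z i‖ := norm_sub_le_norm_add _ _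

theorem norm_ofReal_mul_exp_ofReal_mul_I (v r : ℝ) : ‖(v : ℂ) * exp (r * I)‖ = |v| := by
  rw [norm_mul, norm_exp_ofReal_mul_I, norm_real, Real.norm_eq_abs, mul_one]

section Rays

variable {ι : Type*} {s : Finset ι} {V φ : ι → ℝ}

theorem norm_sum_ray_le (hV : ∀ i ∈ s, 0 ≤ V i) :
    ‖∑ i ∈ s, (V i : ℂ) * exp (φ i * I)‖ ≤ ∑ i ∈ s, V i :=
  (norm_sum_le _ _).trans_eq <| sum_congr rfl fun i hi => by
    rw [norm_ofReal_mul_exp_ofReal_mul_I, abs_of_nonneg (hV i hi)]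

theorem sub_sum_erase_le_norm_sum_ray [DecidableEq ι] {i₀ : ι} (hi₀ : i₀ ∈ s)
    (hV : ∀ i ∈ s.erase i₀, 0 ≤ V i) :
    V i₀ - ∑ i ∈ s.erase i₀, V i ≤ ‖∑ i ∈ s, (V i : ℂ) * exp (φ i * I)‖ := by
  have hnorm : ∀ i ∈ s.erase i₀, ‖(V i : ℂ) * exp (φ i * I)‖ = V i := fun i hi => by
    rw [norm_ofReal_mul_exp_ofReal_mul_I, abs_of_nonneg (hV i hi)]
  calc V i₀ - ∑ i ∈ s.erase i₀, V i
      ≤ ‖(V i₀ : ℂ) * exp (φ i₀ * I)‖ - ∑ i ∈ s.erase i₀, ‖(V i : ℂ) * exp (φ i * I)‖ := by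
        rw [sum_congr rfl hnorm, norm_ofReal_mul_exp_ofReal_mul_I]
        gcongr
        exact le_abs_self _
    _ ≤ _ := norm_sub_sum_erase_le_norm_sum hi₀ fun i => (V i : ℂ) * exp (φ i * I)

end Rays

theorem le_logb_sub_logb_of_rpow_mul_le {b x y R : ℝ} (hb : 1 < b) (hy : 0 < y)
    (h : b ^ R * y ≤ x) : R ≤ logb b x - logb b y := by
  have hx : 0 < x := lt_of_lt_of_le (by positivity) h
  rw [← logb_div hx.ne' hy.ne', le_logb_iff_rpow_le hb (div_pos hx hy), le_div_iff₀ hy]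
  exact h

theorem perfect_secrecy_nRay_general {Ω : Type*} [MeasurableSpace Ω] (μ : Measure Ω)
    (nb ne : ℕ)
    (Vb : Fin (nb + 1) → ℝ) (Ve : Fin (ne + 1) → ℝ)
    (hVb : ∀ i, 0 < Vb i) (hVe : ∀ i, 0 < Ve i)
    (φb : Fin (nb + 1) → Ω → ℝ) (φe : Fin (ne + 1) → Ω → ℝ)
    (γbar_b γbar_e : ℝ) (hγb : 0 < γbar_b) (hγe : 0 < γbar_e)
    (γb γe : Ω → ℝ)
    (hγb_def : ∀ ω, γb ω = γbar_b *
      ‖∑ i, (Vb i : ℂ) * Complex.exp ((φb i ω : ℂ) * Complex.I)‖ ^ 2 /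
      (∑ i, (Vb i) ^ 2))
    (hγe_def : ∀ ω, γe ω = γbar_e *
      ‖∑ i, (Ve i : ℂ) * Complex.exp ((φe i ω : ℂ) * Complex.I)‖ ^ 2 /
      (∑ i, (Ve i) ^ 2))
    (γb_min γe_max : ℝ)
    (hγb_min : γb_min = γbar_b * (max 0 (Vb 0 - ∑ i ∈ Finset.univ.erase 0, Vb i)) ^ 2 /
      (∑ i, (Vb i) ^ 2))
    (hγe_max : γe_max = γbar_e * (∑ i, Ve i) ^ 2 / (∑ i, (Ve i) ^ 2))
    (Rs : ℝ)
    (hsec : γb_min > 2 ^ Rs * γe_max + 2 ^ Rs - 1) :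
    μ {ω | max 0 (Real.logb 2 (1 + γb ω) - Real.logb 2 (1 + γe ω)) < Rs} = 0 := by
  have hγb_ge (ω : Ω) : γb_min ≤ γb ω := by
    rw [hγb_def, hγb_min]
    gcongr
    exact max_le (norm_nonneg _)
      (sub_sum_erase_le_norm_sum_ray (mem_univ 0) fun i _ => (hVb i).le)
  have hγe_le (ω : Ω) : γe ω ≤ γe_max := by
    rw [hγe_def, hγe_max]
    gcongr
    exact norm_sum_ray_le fun i _ => (hVe i).le
  have hγe_nonneg (ω : Ω) : 0 ≤ γe ω := by
    rw [hγe_def]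
    positivity
  suffices {ω | max 0 (logb 2 (1 + γb ω) - logb 2 (1 + γe ω)) < Rs} = ∅ by
    rw [this, measure_empty]
  refine Set.eq_empty_of_forall_notMem fun ω => Set.notMem_ofPred_iff.2 <| not_lt.2 ?_
  refine le_trans ?_ (le_max_right _ _)
  refine le_logb_sub_logb_of_rpow_mul_le one_lt_two (by linarith [hγe_nonneg ω]) ?_
  calc (2 : ℝ) ^ Rs * (1 + γe ω) ≤ 2 ^ Rs * (1 + γe_max) := by gcongr; exact hγe_le ω
    _ ≤ 1 + γb_min := by linarith
    _ ≤ 1 + γb ω := by linarith [hγb_ge ω]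

/-- **Proposition 1.** For ray-based legitimate and eavesdropper channels
`h_b = ∑ V_{i,b} e^{jφ_{i,b}}`, `h_e = ∑ V_{i,e} e^{jφ_{i,e}}` with positive ordered
amplitudes and jointly independent uniform phases, if `R_s > 0` and
`γ_b^min > 2^{R_s} γ_e^max + 2^{R_s} − 1`, then the outage probability of secrecy
capacity is zero: `P([log₂(1+γ_b) − log₂(1+γ_e)]⁺ < R_s) = 0`. -/
theorem perfect_secrecy_nRay {Ω : Type*} [MeasurableSpace Ω] (μ : Measure Ω)
    [IsProbabilityMeasure μ] (nb ne : ℕ)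
    (Vb : Fin (nb + 1) → ℝ) (Ve : Fin (ne + 1) → ℝ)
    (hVb : ∀ i, 0 < Vb i) (hVe : ∀ i, 0 < Ve i)
    (hVb_mono : ∀ i j : Fin (nb + 1), i ≤ j → Vb j ≤ Vb i)
    (hVe_mono : ∀ i j : Fin (ne + 1), i ≤ j → Ve j ≤ Ve i)
    (φb : Fin (nb + 1) → Ω → ℝ) (φe : Fin (ne + 1) → Ω → ℝ)
    (hmeasb : ∀ i, Measurable (φb i)) (hmease : ∀ i, Measurable (φe i))
    (hindep : iIndepFun (Sum.elim φb φe) μ)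
    (hunifb : ∀ i, Measure.map (φb i) μ = uniformPhase)
    (hunife : ∀ i, Measure.map (φe i) μ = uniformPhase)
    (γbar_b γbar_e : ℝ) (hγb : 0 < γbar_b) (hγe : 0 < γbar_e)
    (γb γe : Ω → ℝ)
    (hγb_def : ∀ ω, γb ω = γbar_b *
      ‖∑ i, (Vb i : ℂ) * Complex.exp ((φb i ω : ℂ) * Complex.I)‖ ^ 2 /
      (∑ i, (Vb i) ^ 2))
    (hγe_def : ∀ ω, γe ω = γbar_e *
      ‖∑ i, (Ve i : ℂ) * Complex.exp ((φe i ω : ℂ) * Complex.I)‖ ^ 2 /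
      (∑ i, (Ve i) ^ 2))
    (γb_min γe_max : ℝ)
    (hγb_min : γb_min = γbar_b * (max 0 (Vb 0 - ∑ i ∈ Finset.univ.erase 0, Vb i)) ^ 2 /
      (∑ i, (Vb i) ^ 2))
    (hγe_max : γe_max = γbar_e * (∑ i, Ve i) ^ 2 / (∑ i, (Ve i) ^ 2))
    (Rs : ℝ) (hRs : 0 < Rs)
    (hsec : γb_min > 2 ^ Rs * γe_max + 2 ^ Rs - 1) :
    μ {ω | max 0 (Real.logb 2 (1 + γb ω) - Real.logb 2 (1 + γe ω)) < Rs} = 0 :=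
  perfect_secrecy_nRay_general μ nb ne Vb Ve hVb hVe φb φe γbar_b γbar_e hγb hγe γb γe hγb_def
    hγe_def γb_min γe_max hγb_min hγe_max Rs hsec
end

section
/- Let V_1, V_2 > 0, let φ_1, φ_2 be independent random variables each uniformly distributed on [0, 2π), let h = V_1 e^{jφ_1} + V_2 e^{jφ_2}, and let γ = γ̄ |h|² / (V_1² + V_2²) with γ̄ > 0. With Δ = 2V_1V_2/(V_1² + V_2²), for every x with γ̄(1−Δ) ≤ x ≤ γ̄(1+Δ), the cumulative distribution function of γ satisfies P(γ ≤ x) = 1/2 − (1/π) arcsin((1 − x/γ̄)/Δ). -/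
open MeasureTheory ProbabilityTheory Real Complex

/-!
Since `|V₁ e^{ja} + V₂ e^{jb}|² = V₁² + V₂² + 2 V₁ V₂ cos (a - b)`, the SNR is
`γ̄ (1 + Δ cos (φ₁ - φ₂))`, so `γ ≤ x` means `cos (φ₁ - φ₂) ≤ t` with `t = (x/γ̄ - 1)/Δ ∈ [-1, 1]`.
Conditionally on `φ₁ = a`, the set `{b | cos (a - b) ≤ t}` is `2π`-periodic, so its uniform measure
does not depend on `a`; over one period it is the interval `[arccos t, 2π - arccos t]`.
Hence `P(γ ≤ x) = 1 - arccos t / π = 1/2 + arcsin t / π`.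
-/

instance : IsProbabilityMeasure uniformPhase := by
  constructor
  rw [uniformPhase, Measure.smul_apply, Measure.restrict_apply MeasurableSet.univ,
    Set.univ_inter, Real.volume_Ico, smul_eq_mul, sub_zero]
  exact ENNReal.inv_mul_cancel (by positivity) ENNReal.ofReal_ne_top

lemma uniformPhase_apply (s : Set ℝ) :
    uniformPhase s = (ENNReal.ofReal (2 * π))⁻¹ * volume (s ∩ Set.Ico 0 (2 * π)) := by
  rw [uniformPhase, Measure.smul_apply, Measure.restrict_apply' measurableSet_Ico, smul_eq_mul]

lemma norm_mul_exp_add_mul_exp_sq (V₁ V₂ a b : ℝ) :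
    ‖(V₁ : ℂ) * exp (a * I) + (V₂ : ℂ) * exp (b * I)‖ ^ 2 =
      V₁ ^ 2 + V₂ ^ 2 + 2 * V₁ * V₂ * Real.cos (a - b) := by
  rw [Complex.sq_norm, Complex.normSq_apply]
  simp only [add_re, add_im, mul_re, mul_im, ofReal_re, ofReal_im, exp_ofReal_mul_I_re,
    exp_ofReal_mul_I_im, zero_mul, sub_zero, add_zero, Real.cos_sub]
  nlinarith [Real.sin_sq_add_cos_sq a, Real.sin_sq_add_cos_sq b]

lemma cos_le_iff_arccos_le {b t : ℝ} (hb : b ∈ Set.Icc 0 π) (ht₁ : -1 ≤ t) (ht₂ : t ≤ 1) :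
    Real.cos b ≤ t ↔ Real.arccos t ≤ b := by
  conv_lhs => rw [← Real.cos_arccos ht₁ ht₂]
  exact Real.strictAntiOn_cos.le_iff_ge hb ⟨Real.arccos_nonneg t, Real.arccos_le_pi t⟩

lemma cos_le_iff_mem_Icc_arccos {b t : ℝ} (hb : b ∈ Set.Icc 0 (2 * π)) (ht₁ : -1 ≤ t)
    (ht₂ : t ≤ 1) :
    Real.cos b ≤ t ↔ b ∈ Set.Icc (Real.arccos t) (2 * π - Real.arccos t) := by
  have := Real.arccos_le_pi t
  obtain ⟨hb₀, hb₂⟩ := hb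
  rcases le_total b π with hbπ | hπb
  · rw [cos_le_iff_arccos_le ⟨hb₀, hbπ⟩ ht₁ ht₂, Set.mem_Icc]
    exact ⟨fun h => ⟨h, by linarith⟩, And.left⟩
  · rw [← Real.cos_two_pi_sub, cos_le_iff_arccos_le ⟨by linarith, by linarith⟩ ht₁ ht₂,
      Set.mem_Icc]
    exact ⟨fun h => ⟨by linarith, by linarith⟩, fun h => by linarith [h.2]⟩

lemma volume_cos_le_inter_Ioc {t : ℝ} (ht₁ : -1 ≤ t) (ht₂ : t ≤ 1) :
    volume ({b | Real.cos b ≤ t} ∩ Set.Ioc 0 (2 * π)) =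
      ENNReal.ofReal (2 * π - 2 * Real.arccos t) := by
  have hIcc : {b | Real.cos b ≤ t} ∩ Set.Icc 0 (2 * π) =
      Set.Icc (Real.arccos t) (2 * π - Real.arccos t) := by
    ext b
    constructor
    · rintro ⟨hcos, hb⟩
      exact (cos_le_iff_mem_Icc_arccos hb ht₁ ht₂).1 hcos
    · intro hb
      have hb' : b ∈ Set.Icc 0 (2 * π) :=
        ⟨(Real.arccos_nonneg t).trans hb.1, hb.2.trans (by linarith [Real.arccos_nonneg t])⟩
      exact ⟨(cos_le_iff_mem_Icc_arccos hb' ht₁ ht₂).2 hb, hb'⟩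
  rw [measure_congr ((ae_eq_refl _).inter Ioc_ae_eq_Icc), hIcc, Real.volume_Icc]
  ring_nf

lemma uniformPhase_preimage_sub_left {S : Set ℝ} (hS : MeasurableSet S)
    (hper : Function.Periodic (· ∈ S) (2 * π)) (a : ℝ) :
    uniformPhase ((a - ·) ⁻¹' S) =
      (ENNReal.ofReal (2 * π))⁻¹ * volume (S ∩ Set.Ioc 0 (2 * π)) := by
  have hinv : ∀ g : AddSubgroup.zmultiples (2 * π), (fun x => g +ᵥ x) ⁻¹' S = S := by
    rintro ⟨_, n, rfl⟩
    ext x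
    simpa [add_comm] using (hper.zsmul n x).to_iff
  have hfd := isAddFundamentalDomain_Ioc Real.two_pi_pos
  have hpre : (a - ·) ⁻¹' S ∩ Set.Ico 0 (2 * π) =
      (a - ·) ⁻¹' (S ∩ Set.Ioc (a - 2 * π) (a - 2 * π + 2 * π)) := by
    ext b
    simp only [Set.mem_inter_iff, Set.mem_preimage, Set.mem_Ico, Set.mem_Ioc]
    constructor <;> rintro ⟨h₁, h₂, h₃⟩ <;> exact ⟨h₁, by linarith, by linarith⟩
  -- `Ioc (a - 2π) a` and `Ioc 0 2π` are both fundamental domains of `2πℤ`, which preserves `S`.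
  rw [uniformPhase_apply, hpre,
    (Measure.measurePreserving_sub_left volume a).measure_preimage
      (hS.inter measurableSet_Ioc).nullMeasurableSet,
    (hfd _).measure_set_eq (hfd 0) hS hinv, zero_add]

lemma uniformPhase_cos_sub_le (a : ℝ) {t : ℝ} (ht₁ : -1 ≤ t) (ht₂ : t ≤ 1) :
    uniformPhase {b | Real.cos (a - b) ≤ t} = ENNReal.ofReal (1 / 2 + Real.arcsin t / π) := by
  have hper : Function.Periodic (· ∈ {b | Real.cos b ≤ t}) (2 * π) := fun x => by
    simp only [Set.mem_ofPred_eq, Real.cos_add_two_pi]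
  have hmeas : MeasurableSet {b | Real.cos b ≤ t} :=
    measurableSet_le Real.continuous_cos.measurable measurable_const
  change uniformPhase ((a - ·) ⁻¹' {b | Real.cos b ≤ t}) = _
  rw [uniformPhase_preimage_sub_left hmeas hper a,
    volume_cos_le_inter_Ioc ht₁ ht₂, ← ENNReal.ofReal_inv_of_pos Real.two_pi_pos,
    ← ENNReal.ofReal_mul (by positivity), Real.arccos_eq_pi_div_two_sub_arcsin]
  congr 1
  field_simp
  ring

lemma measure_cos_sub_le_of_indepFun {Ω : Type*} [MeasurableSpace Ω] {μ : Measure Ω}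
    [IsProbabilityMeasure μ] {φ₁ φ₂ : Ω → ℝ} (hφ₁ : Measurable φ₁) (hφ₂ : Measurable φ₂)
    (hindep : IndepFun φ₁ φ₂ μ) (hunif₂ : μ.map φ₂ = uniformPhase) {t : ℝ} (ht₁ : -1 ≤ t)
    (ht₂ : t ≤ 1) :
    μ {ω | Real.cos (φ₁ ω - φ₂ ω) ≤ t} = ENNReal.ofReal (1 / 2 + Real.arcsin t / π) := by
  have hA : MeasurableSet {p : ℝ × ℝ | Real.cos (p.1 - p.2) ≤ t} :=
    measurableSet_le (by fun_prop) measurable_const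
  have : IsProbabilityMeasure (μ.map φ₁) := Measure.isProbabilityMeasure_map hφ₁.aemeasurable
  calc μ {ω | Real.cos (φ₁ ω - φ₂ ω) ≤ t}
      = μ.map (fun ω => (φ₁ ω, φ₂ ω)) {p : ℝ × ℝ | Real.cos (p.1 - p.2) ≤ t} :=
        (Measure.map_apply (hφ₁.prodMk hφ₂) hA).symm
    _ = ((μ.map φ₁).prod uniformPhase) {p : ℝ × ℝ | Real.cos (p.1 - p.2) ≤ t} := by
        rw [(indepFun_iff_map_prod_eq_prod_map_map hφ₁.aemeasurable hφ₂.aemeasurable).1 hindep,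
          hunif₂]
    _ = ∫⁻ a, uniformPhase {b | Real.cos (a - b) ≤ t} ∂(μ.map φ₁) := Measure.prod_apply hA
    _ = ENNReal.ofReal (1 / 2 + Real.arcsin t / π) := by
        simp only [uniformPhase_cos_sub_le _ ht₁ ht₂, lintegral_const, measure_univ, mul_one]

theorem twoWave_snr_cdf_general {Ω : Type*} [MeasurableSpace Ω] (μ : Measure Ω)
    [IsProbabilityMeasure μ] (V₁ V₂ : ℝ) (hV₁ : 0 < V₁) (hV₂ : 0 < V₂)
    (φ₁ φ₂ : Ω → ℝ) (hφ₁ : Measurable φ₁) (hφ₂ : Measurable φ₂)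
    (hindep : IndepFun φ₁ φ₂ μ)
    (hunif₂ : Measure.map φ₂ μ = uniformPhase)
    (γbar : ℝ) (hγbar : 0 < γbar)
    (γ : Ω → ℝ)
    (hγ_def : ∀ ω, γ ω = γbar *
      (‖(V₁ : ℂ) * Complex.exp ((φ₁ ω : ℂ) * Complex.I) +
        (V₂ : ℂ) * Complex.exp ((φ₂ ω : ℂ) * Complex.I)‖) ^ 2 / (V₁ ^ 2 + V₂ ^ 2))
    (Δ : ℝ) (hΔ : Δ = 2 * V₁ * V₂ / (V₁ ^ 2 + V₂ ^ 2)) :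
    ∀ x : ℝ, γbar * (1 - Δ) ≤ x → x ≤ γbar * (1 + Δ) →
      (μ {ω | γ ω ≤ x}).toReal =
        1 / 2 - (1 / Real.pi) * Real.arcsin ((1 - x / γbar) / Δ) := by
  intro x hx₁ hx₂
  have hΔpos : 0 < Δ := by rw [hΔ]; positivity
  have hγ : ∀ ω, γ ω = γbar * (1 + Δ * Real.cos (φ₁ ω - φ₂ ω)) := fun ω => by
    rw [hγ_def, norm_mul_exp_add_mul_exp_sq, hΔ]
    field_simp
  set t := (x / γbar - 1) / Δ with ht
  have ht₁ : -1 ≤ t := by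
    rw [ht, le_div_iff₀ hΔpos, le_sub_iff_add_le, le_div_iff₀ hγbar]; linarith
  have ht₂ : t ≤ 1 := by
    rw [ht, div_le_iff₀ hΔpos, sub_le_iff_le_add, div_le_iff₀ hγbar]; linarith
  have hevent : {ω | γ ω ≤ x} = {ω | Real.cos (φ₁ ω - φ₂ ω) ≤ t} := by
    ext ω
    rw [Set.mem_ofPred_eq, Set.mem_ofPred_eq, hγ, ← le_div_iff₀' hγbar, ← le_sub_iff_add_le',
      ← le_div_iff₀' hΔpos]
  have hcdf_nonneg : 0 ≤ 1 / 2 + Real.arcsin t / π := by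
    have := Real.neg_pi_div_two_le_arcsin t
    have := Real.pi_pos
    field_simp
    linarith
  rw [hevent, measure_cos_sub_le_of_indepFun hφ₁ hφ₂ hindep hunif₂ ht₁ ht₂,
    ENNReal.toReal_ofReal hcdf_nonneg, show (1 - x / γbar) / Δ = -t by ring, Real.arcsin_neg]
  ring

/-- For the two-wave SNR `γ = γ̄ |V₁ e^{jφ₁} + V₂ e^{jφ₂}|²/(V₁²+V₂²)`
with independent uniform phases and `Δ = 2V₁V₂/(V₁²+V₂²)`, the CDF of `γ` on
`[γ̄(1−Δ), γ̄(1+Δ)]` is `x ↦ 1/2 − (1/π) arcsin((1 − x/γ̄)/Δ)`. -/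
theorem twoWave_snr_cdf {Ω : Type*} [MeasurableSpace Ω] (μ : Measure Ω)
    [IsProbabilityMeasure μ] (V₁ V₂ : ℝ) (hV₁ : 0 < V₁) (hV₂ : 0 < V₂)
    (φ₁ φ₂ : Ω → ℝ) (hφ₁ : Measurable φ₁) (hφ₂ : Measurable φ₂)
    (hindep : IndepFun φ₁ φ₂ μ)
    (hunif₁ : Measure.map φ₁ μ = uniformPhase)
    (hunif₂ : Measure.map φ₂ μ = uniformPhase)
    (γbar : ℝ) (hγbar : 0 < γbar)
    (γ : Ω → ℝ)
    (hγ_def : ∀ ω, γ ω = γbar *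
      (‖(V₁ : ℂ) * Complex.exp ((φ₁ ω : ℂ) * Complex.I) +
        (V₂ : ℂ) * Complex.exp ((φ₂ ω : ℂ) * Complex.I)‖) ^ 2 / (V₁ ^ 2 + V₂ ^ 2))
    (Δ : ℝ) (hΔ : Δ = 2 * V₁ * V₂ / (V₁ ^ 2 + V₂ ^ 2)) :
    ∀ x : ℝ, γbar * (1 - Δ) ≤ x → x ≤ γbar * (1 + Δ) →
      (μ {ω | γ ω ≤ x}).toReal =
        1 / 2 - (1 / Real.pi) * Real.arcsin ((1 - x / γbar) / Δ) :=
  twoWave_snr_cdf_general μ V₁ V₂ hV₁ hV₂ φ₁ φ₂ hφ₁ hφ₂ hindep hunif₂ γbar hγbar γ hγ_def Δ hΔ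
end

section
/- Let h_b = V_{1,b} e^{jφ_{1,b}} + V_{2,b} e^{jφ_{2,b}} and h_e = V_{1,e} e^{jφ_{1,e}} + V_{2,e} e^{jφ_{2,e}} be two-wave channel gains with all four phases independent and each uniformly distributed on [0, 2π), and let γ_b = γ̄_b |h_b|²/(V_{1,b}² + V_{2,b}²), γ_e = γ̄_e |h_e|²/(V_{1,e}² + V_{2,e}²), Δ_b = 2V_{1,b}V_{2,b}/(V_{1,b}² + V_{2,b}²), Δ_e = 2V_{1,e}V_{2,e}/(V_{1,e}² + V_{2,e}²). If R_s > 0, Δ_b < 1, and γ̄_b > (2^{R_s} γ̄_e (1 + Δ_e) + 2^{R_s} − 1)/(1 − Δ_b), then P([log₂(1+γ_b) − log₂(1+γ_e)]⁺ < R_s) = 0. -/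
open MeasureTheory ProbabilityTheory Real Complex

/-!
The outage probability vanishes for a deterministic reason: whatever the phases,
`|h|² / (V₁² + V₂²) = 1 + Δ cos (φ₁ - φ₂)` lies in `[1 - Δ, 1 + Δ]`. Hence `γ_b ≥ γ̄_b (1 - Δ_b)`
and `γ_e ≤ γ̄_e (1 + Δ_e)`, and the hypothesis on `γ̄_b` forces
`2^{R_s} (1 + γ_e) < 1 + γ_b` at every outcome, so the outage event is empty.
-/

noncomputable def twoWaveGain (a b θ₁ θ₂ : ℝ) : ℂ :=
  a * Complex.exp (θ₁ * Complex.I) + b * Complex.exp (θ₂ * Complex.I)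

theorem sq_norm_twoWaveGain (a b θ₁ θ₂ : ℝ) :
    ‖twoWaveGain a b θ₁ θ₂‖ ^ 2 = a ^ 2 + b ^ 2 + 2 * a * b * Real.cos (θ₁ - θ₂) := by
  rw [Complex.sq_norm, twoWaveGain, Complex.exp_mul_I, Complex.exp_mul_I, Complex.normSq_apply]
  simp only [← Complex.ofReal_cos, ← Complex.ofReal_sin, Complex.add_re, Complex.add_im,
    Complex.mul_re, Complex.mul_im, Complex.ofReal_re, Complex.ofReal_im, Complex.I_re,
    Complex.I_im]
  rw [Real.cos_sub]
  nlinarith [Real.sin_sq_add_cos_sq θ₁, Real.sin_sq_add_cos_sq θ₂]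

theorem sq_norm_twoWaveGain_div (a b θ₁ θ₂ : ℝ) (hab : a ^ 2 + b ^ 2 ≠ 0) :
    ‖twoWaveGain a b θ₁ θ₂‖ ^ 2 / (a ^ 2 + b ^ 2) =
      1 + 2 * a * b / (a ^ 2 + b ^ 2) * Real.cos (θ₁ - θ₂) := by
  rw [sq_norm_twoWaveGain]
  field_simp

theorem sq_norm_twoWaveGain_div_mem_Icc (a b θ₁ θ₂ : ℝ) (hab : 0 ≤ a * b)
    (hS : a ^ 2 + b ^ 2 ≠ 0) :
    ‖twoWaveGain a b θ₁ θ₂‖ ^ 2 / (a ^ 2 + b ^ 2) ∈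
      Set.Icc (1 - 2 * a * b / (a ^ 2 + b ^ 2)) (1 + 2 * a * b / (a ^ 2 + b ^ 2)) := by
  have hΔ : 0 ≤ 2 * a * b / (a ^ 2 + b ^ 2) := by
    rw [mul_assoc]; exact div_nonneg (by positivity) (by positivity)
  rw [sq_norm_twoWaveGain_div a b θ₁ θ₂ hS]
  constructor
  · nlinarith [Real.neg_one_le_cos (θ₁ - θ₂)]
  · nlinarith [Real.cos_le_one (θ₁ - θ₂)]

theorem lt_logb_sub_logb_of_rpow_mul_lt {b R x y : ℝ} (hb : 1 < b) (hx : 0 < x)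
    (h : b ^ R * x < y) : R < Real.logb b y - Real.logb b x := by
  have hbR : 0 < b ^ R := Real.rpow_pos_of_pos (by linarith) R
  have := Real.logb_lt_logb hb (by positivity) h
  rw [Real.logb_mul hbR.ne' hx.ne', Real.logb_rpow (by linarith) hb.ne'] at this
  linarith

theorem twoWave_perfect_secrecy_general {Ω : Type*} [MeasurableSpace Ω] (μ : Measure Ω)
    (Vb₁ Vb₂ Ve₁ Ve₂ : ℝ) (hVb₁ : 0 < Vb₁) (hVb₂ : 0 < Vb₂)
    (hVe₁ : 0 < Ve₁) (hVe₂ : 0 < Ve₂)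
    (φ : Fin 4 → Ω → ℝ)
    (γbar_b γbar_e : ℝ) (hγbar_b : 0 < γbar_b) (hγbar_e : 0 < γbar_e)
    (γb γe : Ω → ℝ)
    (hγb_def : ∀ ω, γb ω = γbar_b *
      ‖(Vb₁ : ℂ) * Complex.exp ((φ 0 ω : ℂ) * Complex.I) +
        (Vb₂ : ℂ) * Complex.exp ((φ 1 ω : ℂ) * Complex.I)‖ ^ 2 / (Vb₁ ^ 2 + Vb₂ ^ 2))
    (hγe_def : ∀ ω, γe ω = γbar_e *
      ‖(Ve₁ : ℂ) * Complex.exp ((φ 2 ω : ℂ) * Complex.I) +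
        (Ve₂ : ℂ) * Complex.exp ((φ 3 ω : ℂ) * Complex.I)‖ ^ 2 / (Ve₁ ^ 2 + Ve₂ ^ 2))
    (Δb Δe : ℝ)
    (hΔb : Δb = 2 * Vb₁ * Vb₂ / (Vb₁ ^ 2 + Vb₂ ^ 2))
    (hΔe : Δe = 2 * Ve₁ * Ve₂ / (Ve₁ ^ 2 + Ve₂ ^ 2))
    (Rs : ℝ) (hΔb_lt : Δb < 1)
    (hγ : γbar_b > (2 ^ Rs * γbar_e * (1 + Δe) + 2 ^ Rs - 1) / (1 - Δb)) :
    μ {ω | max 0 (Real.logb 2 (1 + γb ω) - Real.logb 2 (1 + γe ω)) < Rs} = 0 := by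
  suffices h : ∀ ω, Rs ≤ max 0 (Real.logb 2 (1 + γb ω) - Real.logb 2 (1 + γe ω)) by
    simp [not_lt.2 (h _)]
  intro ω
  obtain ⟨hgb, -⟩ := sq_norm_twoWaveGain_div_mem_Icc Vb₁ Vb₂ (φ 0 ω) (φ 1 ω)
    (by positivity) (by positivity)
  obtain ⟨hge₀, hge⟩ := sq_norm_twoWaveGain_div_mem_Icc Ve₁ Ve₂ (φ 2 ω) (φ 3 ω)
    (by positivity) (by positivity)
  rw [← hΔb] at hgb
  rw [← hΔe] at hge₀ hge
  have hγb : γbar_b * (1 - Δb) ≤ γb ω := by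
    rw [hγb_def, mul_div_assoc]; exact mul_le_mul_of_nonneg_left hgb hγbar_b.le
  have hγe : γe ω ≤ γbar_e * (1 + Δe) := by
    rw [hγe_def, mul_div_assoc]; exact mul_le_mul_of_nonneg_left hge hγbar_e.le
  have hγe₀ : 0 ≤ γe ω := by
    rw [hγe_def]; positivity
  have hmargin := (div_lt_iff₀ (sub_pos.2 hΔb_lt)).1 hγ
  have hgap : 2 ^ Rs * (1 + γe ω) < 1 + γb ω :=
    calc 2 ^ Rs * (1 + γe ω) ≤ 2 ^ Rs * (1 + γbar_e * (1 + Δe)) := by gcongr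
      _ < 1 + γbar_b * (1 - Δb) := by linarith
      _ ≤ 1 + γb ω := by linarith
  exact (lt_logb_sub_logb_of_rpow_mul_lt one_lt_two (by linarith) hgap).le.trans
    (le_max_right _ _)

/-- For two-wave Bob and Eve channels with jointly independent
uniform phases, if `R_s > 0`, `Δ_b < 1` and
`γ̄_b > (2^{R_s} γ̄_e (1 + Δ_e) + 2^{R_s} − 1)/(1 − Δ_b)`, then the outage
probability of secrecy capacity is zero. -/
theorem twoWave_perfect_secrecy {Ω : Type*} [MeasurableSpace Ω] (μ : Measure Ω)
    [IsProbabilityMeasure μ]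
    (Vb₁ Vb₂ Ve₁ Ve₂ : ℝ) (hVb₁ : 0 < Vb₁) (hVb₂ : 0 < Vb₂)
    (hVe₁ : 0 < Ve₁) (hVe₂ : 0 < Ve₂)
    (φ : Fin 4 → Ω → ℝ) (hφ : ∀ i, Measurable (φ i))
    (hindep : iIndepFun φ μ)
    (hunif : ∀ i, Measure.map (φ i) μ = uniformPhase)
    (γbar_b γbar_e : ℝ) (hγbar_b : 0 < γbar_b) (hγbar_e : 0 < γbar_e)
    (γb γe : Ω → ℝ)
    (hγb_def : ∀ ω, γb ω = γbar_b *
      ‖(Vb₁ : ℂ) * Complex.exp ((φ 0 ω : ℂ) * Complex.I) +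
        (Vb₂ : ℂ) * Complex.exp ((φ 1 ω : ℂ) * Complex.I)‖ ^ 2 / (Vb₁ ^ 2 + Vb₂ ^ 2))
    (hγe_def : ∀ ω, γe ω = γbar_e *
      ‖(Ve₁ : ℂ) * Complex.exp ((φ 2 ω : ℂ) * Complex.I) +
        (Ve₂ : ℂ) * Complex.exp ((φ 3 ω : ℂ) * Complex.I)‖ ^ 2 / (Ve₁ ^ 2 + Ve₂ ^ 2))
    (Δb Δe : ℝ)
    (hΔb : Δb = 2 * Vb₁ * Vb₂ / (Vb₁ ^ 2 + Vb₂ ^ 2))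
    (hΔe : Δe = 2 * Ve₁ * Ve₂ / (Ve₁ ^ 2 + Ve₂ ^ 2))
    (Rs : ℝ) (hRs : 0 < Rs) (hΔb_lt : Δb < 1)
    (hγ : γbar_b > (2 ^ Rs * γbar_e * (1 + Δe) + 2 ^ Rs - 1) / (1 - Δb)) :
    μ {ω | max 0 (Real.logb 2 (1 + γb ω) - Real.logb 2 (1 + γe ω)) < Rs} = 0 :=
  twoWave_perfect_secrecy_general μ Vb₁ Vb₂ Ve₁ Ve₂ hVb₁ hVb₂ hVe₁ hVe₂ φ γbar_b γbar_e hγbar_b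
    hγbar_e γb γe hγb_def hγe_def Δb Δe hΔb hΔe Rs hΔb_lt hγ
end

section
/- Let γ_b and γ_e be independent nonnegative real random variables, with the cumulative distribution function of γ_b continuous. Let γ_th ≥ 0 with P(γ_b > γ_th) > 0 and R_s > 0. Denote F_{γ_b}(x) = P(γ_b ≤ x), F_{γ_e}(t) = P(γ_e ≤ t), and μ_{γ_e} the law of γ_e. Then P(log₂(1+γ_b) − log₂(1+γ_e) < R_s | γ_b > γ_th) = (1/(1 − F_{γ_b}(γ_th))) ∫_{\{t : t > (γ_th+1)2^{−R_s} − 1\}} F_{γ_b}(2^{R_s} t + 2^{R_s} − 1) dμ_{γ_e}(t) − F_{γ_b}(γ_th)(1 − F_{γ_e}((γ_th+1)2^{−R_s} − 1)) / (1 − F_{γ_b}(γ_th)). -/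
open MeasureTheory ProbabilityTheory Real

/-- Closed-form for the conditional outage probability of secrecy
capacity under the reliability constraint `γ_b > γ_th` (eq. (27) of the paper):
`P(log₂(1+γ_b) − log₂(1+γ_e) < R_s | γ_b > γ_th)
  = (1/(1−F_b(γ_th))) ∫_{t > (γ_th+1)2^{−R_s}−1} F_b(2^{R_s} t + 2^{R_s} − 1) dμ_{γ_e}(t)
    − F_b(γ_th)(1 − F_e((γ_th+1)2^{−R_s}−1))/(1−F_b(γ_th))`. -/
theorem conditional_opsc_integral_formula {Ω : Type*} [MeasurableSpace Ω]
    (μ : Measure Ω) [IsProbabilityMeasure μ] (γb γe : Ω → ℝ)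
    (hb : Measurable γb) (he : Measurable γe)
    (hb_nonneg : ∀ ω, 0 ≤ γb ω) (he_nonneg : ∀ ω, 0 ≤ γe ω)
    (hindep : IndepFun γb γe μ)
    (hcont : Continuous fun x : ℝ => (μ {ω | γb ω ≤ x}).toReal)
    (γth : ℝ) (hγth : 0 ≤ γth) (hpos : μ {ω | γth < γb ω} ≠ 0)
    (Rs : ℝ) (hRs : 0 < Rs) :
    ((μ[|{ω | γth < γb ω}])
        {ω | Real.logb 2 (1 + γb ω) - Real.logb 2 (1 + γe ω) < Rs}).toReal =
      (1 / (1 - (μ {ω | γb ω ≤ γth}).toReal)) *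
        (∫ t in Set.Ioi ((γth + 1) * 2 ^ (-Rs) - 1),
          (μ {ω | γb ω ≤ 2 ^ Rs * t + 2 ^ Rs - 1}).toReal ∂(Measure.map γe μ)) -
      (μ {ω | γb ω ≤ γth}).toReal *
        (1 - (μ {ω | γe ω ≤ (γth + 1) * 2 ^ (-Rs) - 1}).toReal) /
        (1 - (μ {ω | γb ω ≤ γth}).toReal) := by
  -- notation
  set c : ℝ := (γth + 1) * 2 ^ (-Rs) - 1 with hc_def
  set g : ℝ → ℝ := fun t => 2 ^ Rs * t + 2 ^ Rs - 1 with hg_def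
  set νb : Measure ℝ := Measure.map γb μ with hνb_def
  set νe : Measure ℝ := Measure.map γe μ with hνe_def
  have h2 : (0:ℝ) < 2 ^ Rs := Real.rpow_pos_of_pos two_pos Rs
  have hinst_b : IsProbabilityMeasure νb := Measure.isProbabilityMeasure_map hb.aemeasurable
  have hinst_e : IsProbabilityMeasure νe := Measure.isProbabilityMeasure_map he.aemeasurable
  -- CDF relations
  have hFb : ∀ x : ℝ, μ {ω | γb ω ≤ x} = νb (Set.Iic x) := fun x => by
    rw [hνb_def, Measure.map_apply hb measurableSet_Iic]; rfl
  have hFe : ∀ x : ℝ, μ {ω | γe ω ≤ x} = νe (Set.Iic x) := fun x => by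
    rw [hνe_def, Measure.map_apply he measurableSet_Iic]; rfl
  have hcont' : Continuous fun x : ℝ => (νb (Set.Iic x)).toReal := by
    simpa only [hFb] using hcont
  -- no atoms: νb (Iio T) = νb (Iic T)
  have hnoatom : ∀ T : ℝ, νb (Set.Iio T) = νb (Set.Iic T) := by
    intro T
    have hmono : Monotone fun n : ℕ => Set.Iic (T - 1 / (n + 1)) := by
      intro m n hmn
      apply Set.Iic_subset_Iic.2
      have hcast : (m : ℝ) + 1 ≤ (n : ℝ) + 1 := by exact_mod_cast Nat.succ_le_succ hmn
      have : (1:ℝ) / (n + 1) ≤ 1 / (m + 1) :=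
        one_div_le_one_div_of_le (by positivity) hcast
      linarith
    have hunion : (⋃ n : ℕ, Set.Iic (T - 1 / (n + 1))) = Set.Iio T := by
      ext x
      simp only [Set.mem_iUnion, Set.mem_Iic, Set.mem_Iio]
      constructor
      · rintro ⟨n, hn⟩
        have : (0:ℝ) < 1 / (n + 1) := by positivity
        linarith
      · intro hx
        obtain ⟨n, hn⟩ := exists_nat_one_div_lt (show (0:ℝ) < T - x by linarith)
        exact ⟨n, by linarith⟩
    have h1 : Filter.Tendsto (fun n : ℕ => νb (Set.Iic (T - 1 / (n + 1))))
        Filter.atTop (nhds (νb (Set.Iio T))) := by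
      rw [← hunion]
      exact tendsto_measure_iUnion_atTop hmono
    have h2' : Filter.Tendsto (fun n : ℕ => (νb (Set.Iic (T - 1 / (n + 1)))).toReal)
        Filter.atTop (nhds ((νb (Set.Iic T)).toReal)) := by
      have harg : Filter.Tendsto (fun n : ℕ => T - 1 / ((n : ℝ) + 1)) Filter.atTop (nhds T) := by
        have := tendsto_one_div_add_atTop_nhds_zero_nat (𝕜 := ℝ)
        have := (tendsto_const_nhds (x := T) (f := Filter.atTop (α := ℕ))).sub this
        simpa using this
      exact (hcont'.tendsto T).comp harg
    have h3 : Filter.Tendsto (fun n : ℕ => (νb (Set.Iic (T - 1 / (n + 1)))).toReal)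
        Filter.atTop (nhds ((νb (Set.Iio T)).toReal)) := by
      apply (ENNReal.continuousOn_toReal.continuousAt _).tendsto.comp h1
      exact IsOpen.mem_nhds isOpen_ne (measure_ne_top νb _)
    have heq : (νb (Set.Iio T)).toReal = (νb (Set.Iic T)).toReal :=
      tendsto_nhds_unique h3 h2'
    have hle : νb (Set.Iio T) ≤ νb (Set.Iic T) := measure_mono Set.Iio_subset_Iic_self
    exact le_antisymm hle
      (le_of_eq ((ENNReal.toReal_eq_toReal_iff' (measure_ne_top _ _) (measure_ne_top _ _)).1 heq).symm)
  -- event rewrite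
  have hev : {ω | Real.logb 2 (1 + γb ω) - Real.logb 2 (1 + γe ω) < Rs} =
      {ω | γb ω < g (γe ω)} := by
    ext ω
    have hx : (0:ℝ) < 1 + γb ω := by linarith [hb_nonneg ω]
    have hy : (0:ℝ) < 1 + γe ω := by linarith [he_nonneg ω]
    simp only [Set.mem_setOf_eq]
    rw [← Real.logb_div (ne_of_gt hx) (ne_of_gt hy),
      Real.logb_lt_iff_lt_rpow one_lt_two (by positivity),
      div_lt_iff₀ hy]
    simp only [hg_def]
    constructor <;> intro h <;> nlinarith
  -- measurability of g
  have hgcont : Continuous g := by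
    simp only [hg_def]; fun_prop
  have hgm : Measurable g := hgcont.measurable
  -- the intersection event measure via independence
  have hA : MeasurableSet {ω | γth < γb ω} := measurableSet_lt measurable_const hb
  have hjoint : μ.map (fun ω => (γb ω, γe ω)) = νb.prod νe :=
    (ProbabilityTheory.indepFun_iff_map_prod_eq_prod_map_map hb.aemeasurable
      he.aemeasurable).1 hindep
  have hSmeas : MeasurableSet {p : ℝ × ℝ | γth < p.1 ∧ p.1 < g p.2} :=
    (measurableSet_lt measurable_const measurable_fst).inter
      (measurableSet_lt measurable_fst (hgm.comp measurable_snd))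
  have hkey : μ ({ω | γth < γb ω} ∩ {ω | γb ω < g (γe ω)}) =
      ∫⁻ t, νb (Set.Ioo γth (g t)) ∂νe := by
    have hpre : {ω | γth < γb ω} ∩ {ω | γb ω < g (γe ω)} =
        (fun ω => (γb ω, γe ω)) ⁻¹' {p : ℝ × ℝ | γth < p.1 ∧ p.1 < g p.2} := by
      ext ω; simp [Set.mem_setOf_eq]
    rw [hpre, ← Measure.map_apply (hb.prodMk he) hSmeas, hjoint,
      Measure.prod_apply_symm hSmeas]
    refine lintegral_congr fun t => ?_
    first
    | rfl
    | · congr 1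
        ext x
        simp [Set.mem_Ioo, Set.mem_preimage, Set.mem_setOf_eq]
  -- slice measure identity
  have hslice : ∀ t : ℝ, νb (Set.Ioo γth (g t)) = νb (Set.Iio (g t)) - νb (Set.Iic γth) := by
    intro t
    rcases le_or_gt (g t) γth with h | h
    · rw [Set.Ioo_eq_empty (not_lt.2 h), measure_empty]
      symm
      rw [tsub_eq_zero_iff_le]
      exact measure_mono (fun x hx => le_trans (le_of_lt hx) h)
    · have : Set.Ioo γth (g t) = Set.Iio (g t) \ Set.Iic γth := by
        ext x; simp [Set.mem_Ioo, Set.mem_Iio, Set.mem_Iic, and_comm, not_le]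
      rw [this]
      exact measure_diff (fun x hx => lt_of_le_of_lt hx h)
        measurableSet_Iic.nullMeasurableSet (measure_ne_top _ _)
  -- restrict the lintegral to Ioi c
  have hg_gt : ∀ t : ℝ, c < t ↔ γth < g t := by
    intro t
    simp only [hc_def, hg_def]
    rw [show (2:ℝ) ^ (-Rs) = ((2:ℝ) ^ Rs)⁻¹ by rw [Real.rpow_neg (by norm_num)]]
    constructor
    · intro h
      nlinarith [mul_lt_mul_of_pos_left h h2, mul_inv_cancel₀ (ne_of_gt h2)]
    · intro h
      have h2i : (0:ℝ) < ((2:ℝ)^Rs)⁻¹ := by positivity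
      nlinarith [mul_lt_mul_of_pos_left h h2i, mul_inv_cancel₀ (ne_of_gt h2)]
  have hrestr : (∫⁻ t, νb (Set.Ioo γth (g t)) ∂νe) =
      ∫⁻ t in Set.Ioi c, νb (Set.Ioo γth (g t)) ∂νe := by
    rw [← lintegral_indicator measurableSet_Ioi]
    congr 1
    ext t
    rcases le_or_gt t c with h | h
    · rw [Set.indicator_of_notMem (by simpa using h)]
      have hle : ¬ γth < g t := fun hgt => absurd ((hg_gt t).2 hgt) (not_lt.2 h)
      rw [Set.Ioo_eq_empty hle, measure_empty]
    · rw [Set.indicator_of_mem (by simpa using h)]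
  -- measurable integrand
  have hmIio : Measurable fun x : ℝ => νb (Set.Iio x) := by
    apply Monotone.measurable
    intro a b hab
    exact measure_mono (Set.Iio_subset_Iio hab)
  have hmeas_f : Measurable fun t : ℝ => νb (Set.Ioo γth (g t)) := by
    have : (fun t : ℝ => νb (Set.Ioo γth (g t))) =
        fun t => νb (Set.Iio (g t)) - νb (Set.Iic γth) := by
      ext t; exact hslice t
    rw [this]
    exact (hmIio.comp hgm).sub measurable_const
  -- convert to a real integral
  have hfin : ∀ t : ℝ, νb (Set.Ioo γth (g t)) < ⊤ := fun t => measure_lt_top _ _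
  have htoReal : (∫⁻ t in Set.Ioi c, νb (Set.Ioo γth (g t)) ∂νe).toReal =
      ∫ t in Set.Ioi c, (νb (Set.Ioo γth (g t))).toReal ∂νe := by
    rw [integral_toReal (hmeas_f.aemeasurable.restrict) (Filter.Eventually.of_forall hfin)]
  -- pointwise value on Ioi c
  have hval : ∀ t ∈ Set.Ioi c, (νb (Set.Ioo γth (g t))).toReal =
      (νb (Set.Iic (g t))).toReal - (νb (Set.Iic γth)).toReal := by
    intro t ht
    rw [hslice t, hnoatom (g t), ENNReal.toReal_sub_of_le
      (measure_mono (Set.Iic_subset_Iic.2 (le_of_lt ((hg_gt t).1 ht)))) (measure_ne_top _ _)]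
  -- integrability facts
  have hcont_comp : Continuous fun t : ℝ => (νb (Set.Iic (g t))).toReal :=
    hcont'.comp hgcont
  have hbound : ∀ t : ℝ, ‖(νb (Set.Iic (g t))).toReal‖ ≤ 1 := by
    intro t
    rw [Real.norm_eq_abs, abs_of_nonneg ENNReal.toReal_nonneg]
    exact ENNReal.toReal_le_of_le_ofReal one_pos.le (by simpa using prob_le_one)
  have hint1 : IntegrableOn (fun t : ℝ => (νb (Set.Iic (g t))).toReal) (Set.Ioi c) νe := by
    apply Integrable.mono' (integrable_const 1)
      (hcont_comp.aestronglyMeasurable.restrict)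
    exact Filter.Eventually.of_forall hbound
  have hint2 : IntegrableOn (fun _ : ℝ => (νb (Set.Iic γth)).toReal) (Set.Ioi c) νe :=
    integrable_const _
  -- compute the set integral
  have hIoi_toReal : (νe (Set.Ioi c)).toReal = 1 - (νe (Set.Iic c)).toReal := by
    have : νe (Set.Iic c) + νe (Set.Ioi c) = 1 := by
      rw [← measure_union (Set.Iic_disjoint_Ioi le_rfl) measurableSet_Ioi,
        Set.Iic_union_Ioi, measure_univ]
    have h1 := congrArg ENNReal.toReal this
    rw [ENNReal.toReal_add (measure_ne_top _ _) (measure_ne_top _ _)] at h1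
    simp only [ENNReal.toReal_one] at h1
    linarith
  have hsetint : ∫ t in Set.Ioi c, (νb (Set.Ioo γth (g t))).toReal ∂νe =
      (∫ t in Set.Ioi c, (νb (Set.Iic (g t))).toReal ∂νe) -
        (νb (Set.Iic γth)).toReal * (1 - (νe (Set.Iic c)).toReal) := by
    rw [setIntegral_congr_fun measurableSet_Ioi hval, integral_sub hint1 hint2,
      setIntegral_const, Measure.real, hIoi_toReal, smul_eq_mul]
    ring
  -- conditional probability
  have hμA_ne_top : μ {ω | γth < γb ω} ≠ ⊤ := measure_ne_top _ _
  have hcond : (μ[|{ω | γth < γb ω}])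
      {ω | Real.logb 2 (1 + γb ω) - Real.logb 2 (1 + γe ω) < Rs} =
      (μ {ω | γth < γb ω})⁻¹ * μ ({ω | γth < γb ω} ∩ {ω | γb ω < g (γe ω)}) := by
    rw [cond_apply hA, hev]
  -- total mass split for γb
  have hsplit : (μ {ω | γth < γb ω}).toReal = 1 - (μ {ω | γb ω ≤ γth}).toReal := by
    have huniv : {ω | γb ω ≤ γth} ∪ {ω | γth < γb ω} = Set.univ := by
      ext ω; simp [le_or_gt]
    have hdis : Disjoint {ω | γb ω ≤ γth} {ω | γth < γb ω} :=
      Set.disjoint_left.2 fun ω h1 h2 => by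
        simp only [Set.mem_setOf_eq] at h1 h2
        exact not_lt.2 h1 h2
    have : μ {ω | γb ω ≤ γth} + μ {ω | γth < γb ω} = 1 := by
      calc μ {ω | γb ω ≤ γth} + μ {ω | γth < γb ω}
          = μ ({ω | γb ω ≤ γth} ∪ {ω | γth < γb ω}) := (measure_union hdis hA).symm
        _ = 1 := by rw [huniv, measure_univ]
    have h1 := congrArg ENNReal.toReal this
    rw [ENNReal.toReal_add (measure_ne_top _ _) (measure_ne_top _ _)] at h1
    simp only [ENNReal.toReal_one] at h1
    linarith
  have hApos : 0 < (μ {ω | γth < γb ω}).toReal :=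
    ENNReal.toReal_pos hpos hμA_ne_top
  have hne : (1 : ℝ) - (μ {ω | γb ω ≤ γth}).toReal ≠ 0 := by
    rw [← hsplit]; exact ne_of_gt hApos
  -- assemble
  rw [hcond, ENNReal.toReal_mul, hkey, hrestr, ENNReal.toReal_inv, htoReal, hsetint, hsplit]
  simp only [hFb, hFe]
  rw [hFb γth] at hne
  have : (∫ t in Set.Ioi c, (νb (Set.Iic (g t))).toReal ∂νe) =
      ∫ t in Set.Ioi ((γth + 1) * 2 ^ (-Rs) - 1),
        (νb (Set.Iic (2 ^ Rs * t + 2 ^ Rs - 1))).toReal ∂νe := rfl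
  rw [this]
  field_simp
end

section
/- Let γ_b and γ_e be independent random variables with γ_b exponentially distributed with mean γ̄_b > 0 and γ_e exponentially distributed with mean γ̄_e > 0 (Rayleigh fading SNRs). Then for every R_s ≥ 0, P(γ_b < 2^{R_s} γ_e + 2^{R_s} − 1) > 0; that is, the outage probability of secrecy capacity is strictly positive and perfect secrecy cannot be achieved, regardless of the values of γ̄_b, γ̄_e and R_s. -/
/-!
The outage event contains `{γb ≤ 1} ∩ {2 ^ Rs * γe > 2}`. By independence its probability is
the product of an exponential probability of `[0, 1]` and an exponential tail probability,
and an exponential law charges both: its cdf `1 - exp (-r x)` lies strictly between `0` and `1`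
for `x > 0`.
-/

open MeasureTheory ProbabilityTheory Real Set

namespace ProbabilityTheory

lemma IndepFun.measure_inter_preimage_pos {Ω α β : Type*} {mΩ : MeasurableSpace Ω}
    {mα : MeasurableSpace α} {mβ : MeasurableSpace β} {μ : Measure Ω} {X : Ω → α} {Y : Ω → β}
    (hXY : IndepFun X Y μ) {s : Set α} {t : Set β} (hs : MeasurableSet s) (ht : MeasurableSet t)
    (hX : 0 < μ (X ⁻¹' s)) (hY : 0 < μ (Y ⁻¹' t)) : 0 < μ (X ⁻¹' s ∩ Y ⁻¹' t) := by
  rw [hXY.measure_inter_preimage_eq_mul s t hs ht]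
  exact ENNReal.mul_pos hX.ne' hY.ne'

lemma measure_Iic_pos_of_cdf_pos {μ : Measure ℝ} [IsProbabilityMeasure μ] {x : ℝ}
    (h : 0 < cdf μ x) : 0 < μ (Iic x) := by
  rwa [← ofReal_cdf, ENNReal.ofReal_pos]

lemma measure_Ioi_pos_of_cdf_lt_one {μ : Measure ℝ} [IsProbabilityMeasure μ] {x : ℝ}
    (h : cdf μ x < 1) : 0 < μ (Ioi x) := by
  rw [← compl_Iic, prob_compl_eq_one_sub measurableSet_Iic, tsub_pos_iff_lt, ← ofReal_cdf,
    ← ENNReal.ofReal_one, ENNReal.ofReal_lt_ofReal_iff one_pos]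
  exact h

variable {r : ℝ}

lemma cdf_expMeasure_pos (hr : 0 < r) {x : ℝ} (hx : 0 < x) : 0 < cdf (expMeasure r) x := by
  rw [cdf_expMeasure_eq hr, if_pos hx.le, sub_pos, Real.exp_lt_one_iff, neg_lt_zero]
  positivity

lemma cdf_expMeasure_lt_one (hr : 0 < r) (x : ℝ) : cdf (expMeasure r) x < 1 := by
  rw [cdf_expMeasure_eq hr]
  split_ifs
  · linarith [exp_pos (-(r * x))]
  · exact one_pos

lemma expMeasure_Iic_pos (hr : 0 < r) {x : ℝ} (hx : 0 < x) : 0 < expMeasure r (Iic x) :=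
  have := isProbabilityMeasure_expMeasure hr
  measure_Iic_pos_of_cdf_pos (cdf_expMeasure_pos hr hx)

lemma expMeasure_Ioi_pos (hr : 0 < r) (x : ℝ) : 0 < expMeasure r (Ioi x) :=
  have := isProbabilityMeasure_expMeasure hr
  measure_Ioi_pos_of_cdf_lt_one (cdf_expMeasure_lt_one hr x)

end ProbabilityTheory

theorem rayleigh_no_perfect_secrecy_general {Ω : Type*} [MeasurableSpace Ω] (μ : Measure Ω)
    [IsProbabilityMeasure μ] (γb γe : Ω → ℝ)
    (hb : Measurable γb) (he : Measurable γe)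
    (hindep : IndepFun γb γe μ)
    (γbar_b γbar_e : ℝ) (hγb : 0 < γbar_b) (hγe : 0 < γbar_e)
    (hlawb : Measure.map γb μ = ProbabilityTheory.expMeasure γbar_b⁻¹)
    (hlawe : Measure.map γe μ = ProbabilityTheory.expMeasure γbar_e⁻¹)
    (Rs : ℝ) :
    0 < μ {ω | γb ω < 2 ^ Rs * γe ω + 2 ^ Rs - 1} := by
  have hc : 0 < (2 : ℝ) ^ Rs := by positivity
  -- If `γb ≤ 1` and `2 ^ Rs * γe > 2`, then `2 ^ Rs * γe + 2 ^ Rs - 1 > 1 + 2 ^ Rs > γb`.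
  have hsub : γb ⁻¹' Iic 1 ∩ γe ⁻¹' Ioi (2 / 2 ^ Rs) ⊆
      {ω | γb ω < 2 ^ Rs * γe ω + 2 ^ Rs - 1} := by
    rintro ω ⟨hbω, heω⟩
    have : 2 < 2 ^ Rs * γe ω := (div_lt_iff₀' hc).1 heω
    simp only [mem_preimage, mem_Iic] at hbω
    simp only [mem_ofPred_eq]
    linarith
  refine lt_of_lt_of_le ?_ (measure_mono hsub)
  refine hindep.measure_inter_preimage_pos measurableSet_Iic measurableSet_Ioi ?_ ?_
  · rw [← Measure.map_apply hb measurableSet_Iic, hlawb]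
    exact expMeasure_Iic_pos (inv_pos.2 hγb) one_pos
  · rw [← Measure.map_apply he measurableSet_Ioi, hlawe]
    exact expMeasure_Ioi_pos (inv_pos.2 hγe) _

/-- For independent exponentially distributed SNRs `γ_b, γ_e`
(Rayleigh fading) with means `γ̄_b, γ̄_e > 0`, the outage probability of secrecy
capacity `P(γ_b < 2^{R_s} γ_e + 2^{R_s} − 1)` is strictly positive for every
`R_s ≥ 0`: perfect secrecy can never be achieved. -/
theorem rayleigh_no_perfect_secrecy {Ω : Type*} [MeasurableSpace Ω] (μ : Measure Ω)
    [IsProbabilityMeasure μ] (γb γe : Ω → ℝ)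
    (hb : Measurable γb) (he : Measurable γe)
    (hindep : IndepFun γb γe μ)
    (γbar_b γbar_e : ℝ) (hγb : 0 < γbar_b) (hγe : 0 < γbar_e)
    (hlawb : Measure.map γb μ = ProbabilityTheory.expMeasure γbar_b⁻¹)
    (hlawe : Measure.map γe μ = ProbabilityTheory.expMeasure γbar_e⁻¹)
    (Rs : ℝ) (hRs : 0 ≤ Rs) :
    0 < μ {ω | γb ω < 2 ^ Rs * γe ω + 2 ^ Rs - 1} :=
  rayleigh_no_perfect_secrecy_general μ γb γe hb he hindep γbar_b γbar_e hγb hγe hlawb hlawe Rs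
end
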